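/- arXiv:2507.08353 — 7 statements merged into one kernel-verified Lean document; each statement's English description precedes it below -/
import Mathlib

section
/- For every n ≥ 1 there exists a V3-saturated family F of subsets of [n] with |F| ≤ 2n, namely the union of two maximal chains in the Boolean lattice that intersect only at ∅ and [n]. -/
open Finset

variable {n : ℕ}

/-- Two sets are incomparable under inclusion. -/
def Incomp (A B : Finset (Fin n)) : Prop := ¬ A ⊆ B ∧ ¬ B ⊆ A

/-- `A, B1, B2, B3` form an induced copy of `V3`: `A` strictly below three
pairwise incomparable sets. -/
def IsV3Copy (A B1 B2 B3 : Finset (Fin n)) : Prop :=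
  A ⊂ B1 ∧ A ⊂ B2 ∧ A ⊂ B3 ∧ Incomp B1 B2 ∧ Incomp B1 B3 ∧ Incomp B2 B3

def V3Free (F : Finset (Finset (Fin n))) : Prop :=
  ¬ ∃ A ∈ F, ∃ B1 ∈ F, ∃ B2 ∈ F, ∃ B3 ∈ F, IsV3Copy A B1 B2 B3

def V3Saturated (F : Finset (Finset (Fin n))) : Prop :=
  V3Free F ∧ ∀ S : Finset (Fin n), S ∉ F → ¬ V3Free (insert S F)

/-- `X` covers `Y` in `F`. -/
def Covers (F : Finset (Finset (Fin n))) (X Y : Finset (Fin n)) : Prop :=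
  Y ⊂ X ∧ ∀ Z ∈ F, Y ⊆ Z → Z ⊆ X → Z = Y ∨ Z = X

/-- `(A,B,C) ∈ Θ_{X,Y}`: the induced order on `{A,B,C,X,Y}` is exactly
`A ⊊ Y ⊊ X`, `A ⊊ B ⊊ X`, `Y ⊊ C`, with `B ∥ Y`, `B ∥ C`, `C ∥ X`. -/
def Theta (X Y A B C : Finset (Fin n)) : Prop :=
  A ⊂ Y ∧ A ⊂ B ∧ Y ⊂ X ∧ B ⊂ X ∧ Y ⊂ C ∧ Incomp B Y ∧ Incomp B C ∧ Incomp C X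

/-- Initial segment `{0, …, k-1}` of `Fin n`. -/
def Iseg (n k : ℕ) : Finset (Fin n) := univ.filter (fun i => (i : ℕ) < k)

/-- Final segment `{n-k, …, n-1}` of `Fin n`. -/
def Jseg (n k : ℕ) : Finset (Fin n) := univ.filter (fun i => n - k ≤ (i : ℕ))

lemma mem_Iseg {n k : ℕ} {i : Fin n} : i ∈ Iseg n k ↔ (i : ℕ) < k := by simp [Iseg]
lemma mem_Jseg {n k : ℕ} {i : Fin n} : i ∈ Jseg n k ↔ n - k ≤ (i : ℕ) := by simp [Jseg]

lemma Iseg_mono {n a b : ℕ} (h : a ≤ b) : Iseg n a ⊆ Iseg n b :=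
  fun i hi => mem_Iseg.mpr (lt_of_lt_of_le (mem_Iseg.mp hi) h)

lemma Jseg_mono {n a b : ℕ} (h : a ≤ b) : Jseg n a ⊆ Jseg n b :=
  fun i hi => mem_Jseg.mpr (le_trans (Nat.sub_le_sub_left h n) (mem_Jseg.mp hi))

lemma card_Iseg {n k : ℕ} (h : k ≤ n) : (Iseg n k).card = k := by
  have hh : ∀ m ∈ Finset.range k, m < n := fun m hm => lt_of_lt_of_le (mem_range.mp hm) h
  have he : Iseg n k = (Finset.range k).attachFin hh := by
    ext i; simp [mem_Iseg, mem_attachFin]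
  rw [he, card_attachFin, card_range]

lemma card_Jseg {n k : ℕ} (h : k ≤ n) : (Jseg n k).card = k := by
  have hh : ∀ m ∈ Finset.Ico (n - k) n, m < n := fun m hm => (mem_Ico.mp hm).2
  have he : Jseg n k = (Finset.Ico (n - k) n).attachFin hh := by
    ext i; simp [mem_Jseg, mem_attachFin, i.is_lt]
  rw [he, card_attachFin, Nat.card_Ico]
  omega

lemma Iseg_zero {n : ℕ} : Iseg n 0 = ∅ := by
  ext i; simp [mem_Iseg]

lemma Iseg_top {n : ℕ} : Iseg n n = univ := by
  ext i; simp [mem_Iseg, i.is_lt]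

lemma no3 {n : ℕ} {X Y : Finset (Fin n)} (h : X ⊆ Y ∨ Y ⊆ X) (hi : Incomp X Y) : False :=
  h.elim hi.1 hi.2

theorem stmt_1 (n : ℕ) (hn : 1 ≤ n) :
    ∃ F : Finset (Finset (Fin n)), V3Saturated F ∧ F.card ≤ 2 * n := by
  classical
  set F : Finset (Finset (Fin n)) :=
    ((Finset.range (n+1)).image (Iseg n)) ∪ ((Finset.Ico 1 n).image (Jseg n)) with hFdef
  have hIF : ∀ k, k ≤ n → Iseg n k ∈ F := by
    intro k hk
    exact mem_union_left _ (mem_image_of_mem _ (mem_range.mpr (by omega)))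
  have hJF : ∀ k, 0 < k → k < n → Jseg n k ∈ F := by
    intro k h1 h2
    exact mem_union_right _ (mem_image_of_mem _ (mem_Ico.mpr ⟨h1, h2⟩))
  have hmem : ∀ X ∈ F, (∃ a, X = Iseg n a) ∨ (∃ a, X = Jseg n a) := by
    intro X hX
    rcases mem_union.mp hX with h | h
    · obtain ⟨a, _, rfl⟩ := mem_image.mp h; exact Or.inl ⟨a, rfl⟩
    · obtain ⟨a, _, rfl⟩ := mem_image.mp h; exact Or.inr ⟨a, rfl⟩
  have hcompI : ∀ a b, Iseg n a ⊆ Iseg n b ∨ Iseg n b ⊆ Iseg n a :=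
    fun a b => (le_total a b).imp Iseg_mono Iseg_mono
  have hcompJ : ∀ a b, Jseg n a ⊆ Jseg n b ∨ Jseg n b ⊆ Jseg n a :=
    fun a b => (le_total a b).imp Jseg_mono Jseg_mono
  have hfree : V3Free F := by
    rintro ⟨A, hA, B1, hB1, B2, hB2, B3, hB3, h1, h2, h3, h12, h13, h23⟩
    rcases hmem B1 hB1 with ⟨a, rfl⟩ | ⟨a, rfl⟩ <;>
      rcases hmem B2 hB2 with ⟨b, rfl⟩ | ⟨b, rfl⟩ <;>
        rcases hmem B3 hB3 with ⟨c, rfl⟩ | ⟨c, rfl⟩ <;>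
          first
            | exact no3 (hcompI a b) h12
            | exact no3 (hcompJ a b) h12
            | exact no3 (hcompI a c) h13
            | exact no3 (hcompJ a c) h13
            | exact no3 (hcompI b c) h23
            | exact no3 (hcompJ b c) h23
  refine ⟨F, ⟨hfree, ?_⟩, ?_⟩
  · -- saturation
    intro S hS hfree'
    set k := S.card with hk
    have hkn : k ≤ n := by simpa using S.card_le_univ
    have hk0 : 0 < k := by
      by_contra h
      have hS0 : S = ∅ := card_eq_zero.mp (by omega)
      exact hS (by rw [hS0, ← Iseg_zero]; exact hIF 0 (by omega))
    have hkltn : k < n := by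
      rcases lt_or_eq_of_le hkn with h | h
      · exact h
      · exfalso
        have : S = univ := eq_univ_of_card S (by rw [← hk, h, Fintype.card_fin])
        exact hS (by rw [this, ← Iseg_top]; exact hIF n le_rfl)
    have hcI : (Iseg n k).card = k := card_Iseg hkn
    have hcJ : (Jseg n k).card = k := card_Jseg hkn
    have hSne : S.Nonempty := card_pos.mp hk0
    have hIne : (Iseg n k).Nonempty := card_pos.mp (by rw [hcI]; exact hk0)
    have hJne : (Jseg n k).Nonempty := card_pos.mp (by rw [hcJ]; exact hk0)
    have hSI : Incomp S (Iseg n k) := by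
      constructor
      · intro h
        exact hS ((eq_of_subset_of_card_le h (by rw [hcI])) ▸ hIF k hkn)
      · intro h
        exact hS ((eq_of_subset_of_card_le h (by rw [hcI])).symm ▸ hIF k hkn)
    have hSJ : Incomp S (Jseg n k) := by
      constructor
      · intro h
        exact hS ((eq_of_subset_of_card_le h (by rw [hcJ])) ▸ hJF k hk0 hkltn)
      · intro h
        exact hS ((eq_of_subset_of_card_le h (by rw [hcJ])).symm ▸ hJF k hk0 hkltn)
    have hIJne : Iseg n k ≠ Jseg n k := by
      intro h
      have h0I : (⟨0, hn⟩ : Fin n) ∈ Iseg n k := mem_Iseg.mpr (by simpa using hk0)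
      have h0J : (⟨0, hn⟩ : Fin n) ∉ Jseg n k := by
        rw [mem_Jseg]; simp; omega
      exact h0J (h ▸ h0I)
    have hIJ : Incomp (Iseg n k) (Jseg n k) := by
      constructor
      · intro h
        exact hIJne (eq_of_subset_of_card_le h (by rw [hcI, hcJ]))
      · intro h
        exact hIJne (eq_of_subset_of_card_le h (by rw [hcI, hcJ])).symm
    apply hfree'
    refine ⟨∅, ?_, S, mem_insert_self _ _, Iseg n k, ?_, Jseg n k, ?_, ?_⟩
    · exact mem_insert_of_mem (Iseg_zero ▸ hIF 0 (by omega))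
    · exact mem_insert_of_mem (hIF k hkn)
    · exact mem_insert_of_mem (hJF k hk0 hkltn)
    exact ⟨empty_ssubset.mpr hSne, empty_ssubset.mpr hIne, empty_ssubset.mpr hJne,
      hSI, hSJ, hIJ⟩
  · -- cardinality
    calc F.card ≤ ((Finset.range (n+1)).image (Iseg n)).card
          + ((Finset.Ico 1 n).image (Jseg n)).card := card_union_le _ _
      _ ≤ (n+1) + (n-1) := by
          gcongr
          · exact le_trans (card_image_le) (by simp)
          · exact le_trans (card_image_le) (by simp)
      _ ≤ 2 * n := by omega
end

section
/- Let F be a V3-saturated family of subsets of [n] and suppose X, Y ∈ F with X covering Y in F. For every i ∈ X \ Y, either there exists Z ∈ F with Z \ Y = {i}, or there exist A, B, C ∈ F such that (A, B, C) ∈ Θ_{X,Y}. -/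
open Finset

variable {n : ℕ}

/-- Auxiliary: the case where the "top" companion `B` lies inside `X`. -/
lemma key2 {n : ℕ} (F : Finset (Finset (Fin n))) (hfree : V3Free F)
    (X Y : Finset (Fin n)) (hX : X ∈ F) (hY : Y ∈ F) (hcov : Covers F X Y)
    (i : Fin n) (hiX : i ∈ X) (hiY : i ∉ Y)
    (A B C : Finset (Fin n)) (hA : A ∈ F) (hB : B ∈ F) (hC : C ∈ F)
    (hAY : A ⊂ Y) (hAB : A ⊂ B) (hAC : A ⊂ C)
    (hSB : Incomp (Y ∪ {i}) B) (hSC : Incomp (Y ∪ {i}) C) (hBC : Incomp B C)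
    (hBX : B ⊆ X) :
    ∃ A ∈ F, ∃ B ∈ F, ∃ C ∈ F, Theta X Y A B C := by
  have hYX : Y ⊆ X := hcov.1.subset
  have hSX : Y ∪ {i} ⊆ X := by
    intro x hx
    rcases Finset.mem_union.mp hx with h | h
    · exact hYX h
    · rw [Finset.mem_singleton] at h; subst h; exact hiX
  -- B ⊊ X
  have hBneX : B ≠ X := by
    intro h; subst h; exact hSB.1 hSX
  -- Incomp B Y
  have hnYB : ¬ Y ⊆ B := by
    intro hYB
    rcases hcov.2 B hB hYB hBX with h | h
    · subst h; exact hSB.2 Finset.subset_union_left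
    · exact hBneX h
  have hnBY : ¬ B ⊆ Y := fun h => hSB.2 (h.trans Finset.subset_union_left)
  -- If Incomp Y C then (A; Y, B, C) is a V3 in F, contradiction.
  have hYC : Y ⊆ C := by
    by_contra hnYC
    have hnCY : ¬ C ⊆ Y := fun h => hSC.2 (h.trans Finset.subset_union_left)
    exact hfree ⟨A, hA, Y, hY, B, hB, C, hC, hAY, hAB, hAC,
      ⟨hnYB, hnBY⟩, ⟨hnYC, hnCY⟩, hBC⟩
  -- C incomparable with X
  have hnCX : ¬ C ⊆ X := by
    intro hCX
    rcases hcov.2 C hC hYC hCX with h | h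
    · subst h; exact hSC.2 Finset.subset_union_left
    · subst h; exact hSC.1 hSX
  have hnXC : ¬ X ⊆ C := fun h => hSC.1 (hSX.trans h)
  have hYneC : Y ≠ C := by
    intro h; subst h; exact hnCX hYX
  exact ⟨A, hA, B, hB, C, hC, hAY, hAB, hcov.1,
    Finset.ssubset_iff_subset_ne.mpr ⟨hBX, hBneX⟩,
    Finset.ssubset_iff_subset_ne.mpr ⟨hYC, hYneC⟩,
    ⟨hnBY, hnYB⟩, hBC, ⟨hnCX, hnXC⟩⟩

/-- Auxiliary: the case where `Y ∪ {i}` is a maximal element of the V3 copy,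
with bottom `A` and other tops `B`, `C`, all in `F`. -/
lemma key1 {n : ℕ} (F : Finset (Finset (Fin n))) (hfree : V3Free F)
    (X Y : Finset (Fin n)) (hX : X ∈ F) (hY : Y ∈ F) (hcov : Covers F X Y)
    (i : Fin n) (hiX : i ∈ X) (hiY : i ∉ Y)
    (A B C : Finset (Fin n)) (hA : A ∈ F) (hB : B ∈ F) (hC : C ∈ F)
    (hAS : A ⊂ Y ∪ {i}) (hAB : A ⊂ B) (hAC : A ⊂ C)
    (hSB : Incomp (Y ∪ {i}) B) (hSC : Incomp (Y ∪ {i}) C) (hBC : Incomp B C) :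
    (∃ Z ∈ F, Z \ Y = {i}) ∨ ∃ A ∈ F, ∃ B ∈ F, ∃ C ∈ F, Theta X Y A B C := by
  have hYX : Y ⊆ X := hcov.1.subset
  have hSX : Y ∪ {i} ⊆ X := by
    intro x hx
    rcases Finset.mem_union.mp hx with h | h
    · exact hYX h
    · rw [Finset.mem_singleton] at h; subst h; exact hiX
  by_cases hiA : i ∈ A
  · -- A \ Y = {i}
    left
    refine ⟨A, hA, ?_⟩
    apply Finset.Subset.antisymm
    · intro x hx
      rcases Finset.mem_sdiff.mp hx with ⟨hxA, hxY⟩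
      rcases Finset.mem_union.mp (hAS.subset hxA) with h | h
      · exact absurd h hxY
      · exact h
    · intro x hx
      rw [Finset.mem_singleton] at hx; subst hx
      exact Finset.mem_sdiff.mpr ⟨hiA, hiY⟩
  · -- A ⊆ Y
    have hAsubY : A ⊆ Y := by
      intro x hx
      rcases Finset.mem_union.mp (hAS.subset hx) with h | h
      · exact h
      · rw [Finset.mem_singleton] at h; subst h; exact absurd hx hiA
    -- incomparability with X for B and C, if they are not below X
    have hnXB : ¬ X ⊆ B := fun h => hSB.1 (hSX.trans h)
    have hnXC : ¬ X ⊆ C := fun h => hSC.1 (hSX.trans h)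
    have hAneY : A ≠ Y := by
      intro h; subst h
      -- then (A; B, C, X) would be a V3 in F with A = Y
      have hnBX : ¬ B ⊆ X := by
        intro hBX
        rcases hcov.2 B hB hAB.subset hBX with h | h
        · exact hAB.ne h.symm
        · subst h; exact hSB.1 hSX
      have hnCX : ¬ C ⊆ X := by
        intro hCX
        rcases hcov.2 C hC hAC.subset hCX with h | h
        · exact hAC.ne h.symm
        · subst h; exact hSC.1 hSX
      exact hfree ⟨A, hA, B, hB, C, hC, X, hX, hAB, hAC, hcov.1,
        hBC, ⟨hnBX, hnXB⟩, ⟨hnCX, hnXC⟩⟩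
    have hAY : A ⊂ Y := Finset.ssubset_iff_subset_ne.mpr ⟨hAsubY, hAneY⟩
    by_cases hBX : B ⊆ X
    · exact Or.inr (key2 F hfree X Y hX hY hcov i hiX hiY A B C hA hB hC
        hAY hAB hAC hSB hSC hBC hBX)
    · by_cases hCX : C ⊆ X
      · exact Or.inr (key2 F hfree X Y hX hY hcov i hiX hiY A C B hA hC hB
          hAY hAC hAB hSC hSB ⟨hBC.2, hBC.1⟩ hCX)
      · -- (A; B, C, X) is a V3 in F, contradiction
        have hAX : A ⊂ X := hAY.trans_subset hYX
        exact absurd ⟨A, hA, B, hB, C, hC, X, hX, hAB, hAC, hAX,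
          hBC, ⟨hBX, hnXB⟩, ⟨hCX, hnXC⟩⟩ hfree

theorem stmt_4 (n : ℕ) (F : Finset (Finset (Fin n))) (hF : V3Saturated F)
    (X Y : Finset (Fin n)) (hX : X ∈ F) (hY : Y ∈ F) (hcov : Covers F X Y)
    (i : Fin n) (hi : i ∈ X \ Y) :
    (∃ Z ∈ F, Z \ Y = {i}) ∨ ∃ A ∈ F, ∃ B ∈ F, ∃ C ∈ F, Theta X Y A B C := by
  obtain ⟨hiX, hiY⟩ := Finset.mem_sdiff.mp hi
  set S : Finset (Fin n) := Y ∪ {i} with hSdef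
  have hSY : Y ⊆ S := Finset.subset_union_left
  have hYneS : Y ≠ S := by
    intro h
    have : i ∈ Y := by rw [h]; exact Finset.mem_union_right _ (Finset.mem_singleton_self i)
    exact hiY this
  have hSdiff : S \ Y = {i} := by
    apply Finset.Subset.antisymm
    · intro x hx
      rcases Finset.mem_sdiff.mp hx with ⟨hxS, hxY⟩
      rcases Finset.mem_union.mp hxS with h | h
      · exact absurd h hxY
      · exact h
    · intro x hx
      rw [Finset.mem_singleton] at hx
      rw [hx]
      exact Finset.mem_sdiff.mpr ⟨Finset.mem_union_right _ (Finset.mem_singleton_self _), hiY⟩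
  by_cases hSF : S ∈ F
  · exact Or.inl ⟨S, hSF, hSdiff⟩
  · have hnot := hF.2 S hSF
    rw [V3Free, not_not] at hnot
    obtain ⟨A, hA, B1, h1, B2, h2, B3, h3, hAB1, hAB2, hAB3, h12, h13, h23⟩ := hnot
    have memF : ∀ T : Finset (Fin n), T ∈ insert S F → T = S ∨ T ∈ F := by
      intro T hT; exact Finset.mem_insert.mp hT
    rcases memF A hA with hAS | hAF
    · -- S is the bottom: then (Y; B1, B2, B3) is a V3 in F
      subst hAS
      have hgetF : ∀ T : Finset (Fin n), T ∈ insert S F → S ⊂ T → T ∈ F := by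
        intro T hT hlt
        rcases memF T hT with h | h
        · subst h; exact absurd hlt (ssubset_irrefl _)
        · exact h
      have hYlt : ∀ T : Finset (Fin n), S ⊂ T → Y ⊂ T :=
        fun T hlt => (Finset.ssubset_iff_subset_ne.mpr ⟨hSY, hYneS⟩).trans hlt
      exact absurd ⟨Y, hY, B1, hgetF B1 h1 hAB1, B2, hgetF B2 h2 hAB2,
        B3, hgetF B3 h3 hAB3, hYlt B1 hAB1, hYlt B2 hAB2, hYlt B3 hAB3,
        h12, h13, h23⟩ hF.1
    · have hne : ∀ T U : Finset (Fin n), Incomp T U → T ≠ U := by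
        intro T U h heq; subst heq; exact h.1 (Finset.Subset.refl T)
      have hgetF : ∀ T : Finset (Fin n), T ∈ insert S F → T ≠ S → T ∈ F := by
        intro T hT hne'
        rcases memF T hT with h | h
        · exact absurd h hne'
        · exact h
      rcases memF B1 h1 with hB1S | hB1F
      · subst hB1S
        exact key1 F hF.1 X Y hX hY hcov i hiX hiY A B2 B3 hAF
          (hgetF B2 h2 (hne B2 S ⟨h12.2, h12.1⟩)) (hgetF B3 h3 (hne B3 S ⟨h13.2, h13.1⟩))
          hAB1 hAB2 hAB3 h12 h13 h23
      rcases memF B2 h2 with hB2S | hB2F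
      · subst hB2S
        exact key1 F hF.1 X Y hX hY hcov i hiX hiY A B1 B3 hAF hB1F
          (hgetF B3 h3 (hne B3 S ⟨h23.2, h23.1⟩))
          hAB2 hAB1 hAB3 ⟨h12.2, h12.1⟩ h23 h13
      rcases memF B3 h3 with hB3S | hB3F
      · subst hB3S
        exact key1 F hF.1 X Y hX hY hcov i hiX hiY A B1 B2 hAF hB1F hB2F
          hAB3 hAB1 hAB2 ⟨h13.2, h13.1⟩ ⟨h23.2, h23.1⟩ h12
      · exact absurd ⟨A, hAF, B1, hB1F, B2, hB2F, B3, hB3F,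
          hAB1, hAB2, hAB3, h12, h13, h23⟩ hF.1
end

section
/- Let F be a V3-free family of subsets of [n], and suppose X, Y ∈ F with X covering Y in F. If there exist A, B, C ∈ F with (A, B, C) ∈ Θ_{X,Y}, then there exists Y₂ ∈ F with B ⊆ Y₂ ⊊ X such that (A, Y₂, C) ∈ Θ_{X,Y} and X covers Y₂ in F. -/
open Finset

variable {n : ℕ}

theorem stmt_5 (n : ℕ) (F : Finset (Finset (Fin n))) (hF : V3Free F)
    (X Y : Finset (Fin n)) (hX : X ∈ F) (hY : Y ∈ F) (hcov : Covers F X Y)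
    (A B C : Finset (Fin n)) (hA : A ∈ F) (hB : B ∈ F) (hC : C ∈ F)
    (hTheta : Theta X Y A B C) :
    ∃ Y₂ ∈ F, B ⊆ Y₂ ∧ Y₂ ⊂ X ∧ Theta X Y A Y₂ C ∧ Covers F X Y₂ := by
  obtain ⟨hAY, hAB, hYX, hBX, hYC, hBY, hBC, hCX⟩ := hTheta
  set S := F.filter (fun Z => B ⊆ Z ∧ Z ⊂ X) with hS
  have hBS : B ∈ S := by simp [hS, hB, hBX]
  obtain ⟨Y₂, hY₂S, hmax⟩ := S.exists_max_image (fun Z => Z.card) ⟨B, hBS⟩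
  simp only [hS, mem_filter] at hY₂S
  obtain ⟨hY₂F, hBY₂, hY₂X⟩ := hY₂S
  have hmax' : ∀ Z ∈ F, B ⊆ Z → Z ⊂ X → Y₂ ⊆ Z → Z = Y₂ := by
    intro Z hZF hBZ hZX hYZ
    have := hmax Z (by simp [hS, hZF, hBZ, hZX])
    exact (Finset.eq_of_subset_of_card_le hYZ this).symm
  have hcov2 : Covers F X Y₂ := by
    refine ⟨hY₂X, fun Z hZF h1 h2 => ?_⟩
    rcases eq_or_ne Z X with h | h
    · exact Or.inr h
    · exact Or.inl (hmax' Z hZF (hBY₂.trans h1) (lt_of_le_of_ne h2 h) h1)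
  have hnYY₂ : ¬ Y ⊆ Y₂ := by
    intro h
    rcases hcov.2 Y₂ hY₂F h hY₂X.subset with h' | h'
    · exact hBY.1 (h' ▸ hBY₂)
    · exact hY₂X.ne h'
  have hnY₂Y : ¬ Y₂ ⊆ Y := fun h => hBY.1 (hBY₂.trans h)
  have hnCY₂ : ¬ C ⊆ Y₂ := fun h => hCX.1 (h.trans hY₂X.subset)
  have hnY₂C : ¬ Y₂ ⊆ C := fun h => hBC.1 (hBY₂.trans h)
  exact ⟨Y₂, hY₂F, hBY₂, hY₂X,
    ⟨hAY, hAB.trans_subset hBY₂, hYX, hY₂X, hYC, ⟨hnY₂Y, hnYY₂⟩, ⟨hnY₂C, hnCY₂⟩, hCX⟩, hcov2⟩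
end

section
/- Let F be a V3-saturated family of subsets of [n], and let X ∈ F be not inclusion-minimal in F (i.e., some E ∈ F satisfies E ⊊ X). Then there exists Y ∈ F such that X covers Y in F and for every i ∈ X \ Y there exists Z_i ∈ F with Z_i \ Y = {i}. -/
open Finset

variable {n : ℕ}

section

variable {F : Finset (Finset (Fin n))} {X Y S A B C T : Finset (Fin n)}

lemma Incomp.symm (h : Incomp A B) : Incomp B A := ⟨h.2, h.1⟩

lemma Incomp.ne (h : Incomp A B) : A ≠ B := by
  rintro rfl
  exact h.1 subset_rfl

lemma IsV3Copy.mono_bottom (h : IsV3Copy A B C T) (hSA : S ⊆ A) : IsV3Copy S B C T :=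
  ⟨hSA.trans_ssubset h.1, hSA.trans_ssubset h.2.1, hSA.trans_ssubset h.2.2.1, h.2.2.2⟩

lemma IsV3Copy.swap_left (h : IsV3Copy A B C T) : IsV3Copy A C B T :=
  let ⟨hB, hC, hT, hBC, hBT, hCT⟩ := h
  ⟨hC, hB, hT, hBC.symm, hCT, hBT⟩

lemma IsV3Copy.rotate (h : IsV3Copy A B C T) : IsV3Copy A T B C :=
  let ⟨hB, hC, hT, hBC, hBT, hCT⟩ := h
  ⟨hT, hB, hC, hBT.symm, hCT.symm, hBC⟩

lemma IsV3Copy.bottom_ne (h : IsV3Copy A B C T) : B ≠ A ∧ C ≠ A ∧ T ≠ A :=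
  ⟨h.1.ne', h.2.1.ne', h.2.2.1.ne'⟩

lemma exists_covers_of_ssubset (hB : B ∈ F) (hBX : B ⊂ X) :
    ∃ Y ∈ F, B ⊆ Y ∧ Covers F X Y := by
  obtain ⟨Y, hBY, hYmax⟩ := (F.filter (· ⊂ X)).exists_le_maximal (mem_filter.2 ⟨hB, hBX⟩)
  obtain ⟨hYF, hYX⟩ := mem_filter.1 hYmax.prop
  refine ⟨Y, hYF, hBY, hYX, fun Z hZ hYZ hZX => ?_⟩
  by_cases hZX' : Z = X
  · exact .inr hZX'
  · have hZX : Z ⊂ X := ssubset_of_subset_of_ne hZX hZX'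
    exact .inl (le_antisymm (hYmax.2 (mem_filter.2 ⟨hZ, hZX⟩) hYZ) hYZ)

/-- Since `S` lies above a member of `F`, it cannot be the bottom of the copy of `V3` it creates. -/
lemma V3Saturated.exists_isV3Copy (hF : V3Saturated F) (hS : S ∉ F) (hY : Y ∈ F)
    (hYS : Y ⊆ S) : ∃ A ∈ F, ∃ B ∈ F, ∃ C ∈ F, IsV3Copy A S B C := by
  obtain ⟨A, hA', B1, hB1', B2, hB2', B3, hB3', h⟩ := not_not.1 (hF.2 S hS)
  have mem_of_ne {T} (hT : T ∈ insert S F) (hne : T ≠ S) : T ∈ F :=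
    (mem_insert.1 hT).resolve_left hne
  have ⟨_, _, _, h12, h13, h23⟩ := h
  rcases mem_insert.1 hA' with rfl | hA
  · obtain ⟨hB1A, hB2A, hB3A⟩ := h.bottom_ne
    exact absurd ⟨Y, hY, B1, mem_of_ne hB1' hB1A, B2, mem_of_ne hB2' hB2A, B3,
      mem_of_ne hB3' hB3A, h.mono_bottom hYS⟩ hF.1
  rcases mem_insert.1 hB1' with rfl | hB1
  · exact ⟨A, hA, B2, mem_of_ne hB2' h12.ne.symm, B3, mem_of_ne hB3' h13.ne.symm, h⟩
  rcases mem_insert.1 hB2' with rfl | hB2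
  · exact ⟨A, hA, B1, hB1, B3, mem_of_ne hB3' h23.ne.symm, h.swap_left⟩
  rcases mem_insert.1 hB3' with rfl | hB3
  · exact ⟨A, hA, B1, hB1, B2, hB2, h.rotate⟩
  · exact absurd ⟨A, hA, B1, hB1, B2, hB2, B3, hB3, h⟩ hF.1

def outsideAbove (F : Finset (Finset (Fin n))) (X Y : Finset (Fin n)) : Finset (Finset (Fin n)) :=
  F.filter fun C => Y ⊂ C ∧ ¬ C ⊆ X ∧ ¬ X ⊆ C

lemma mem_outsideAbove : C ∈ outsideAbove F X Y ↔ C ∈ F ∧ Y ⊂ C ∧ Incomp C X :=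
  mem_filter

/-- Raising `Y` to a member above the middle element `B` of a `Θ_{X,Y}` triple loses `C` from
`outsideAbove`, and gains nothing since `F` is `V3`-free. -/
lemma V3Free.outsideAbove_ssubset {Y' : Finset (Fin n)} (hF : V3Free F) (hX : X ∈ F)
    (hA : A ∈ F) (hC : C ∈ F) (hθ : Theta X Y A B C) (hBY' : B ⊆ Y') :
    outsideAbove F X Y' ⊂ outsideAbove F X Y := by
  obtain ⟨hAY, hAB, -, hBX, hYC, -, hBC, hCX⟩ := hθ
  have hsub : outsideAbove F X Y' ⊆ outsideAbove F X Y := by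
    intro D hD
    obtain ⟨hDF, hY'D, hDX⟩ := mem_outsideAbove.1 hD
    refine mem_outsideAbove.2 ⟨hDF, ?_, hDX⟩
    by_cases hCD : C ⊆ D
    · exact hYC.trans_subset hCD
    by_cases hDC : D ⊆ C
    · exact absurd (hBY'.trans (hY'D.subset.trans hDC)) hBC.1
    exact absurd ⟨A, hA, X, hX, C, hC, D, hDF, hAB.trans hBX, hAY.trans hYC,
      hAB.trans (hBY'.trans_ssubset hY'D), hCX.symm, hDX.symm, ⟨hCD, hDC⟩⟩ hF
  refine (ssubset_iff_of_subset hsub).2 ⟨C, mem_outsideAbove.2 ⟨hC, hYC, hCX⟩, fun hC' => ?_⟩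
  exact hBC.1 (hBY'.trans (mem_outsideAbove.1 hC').2.1.subset)

/-- A cover `Y` of `X` minimising `#(outsideAbove F X Y)` admits no `Θ_{X,Y}` triple. -/
lemma V3Free.exists_covers_forall_not_theta (hF : V3Free F) (hX : X ∈ F)
    (hmin : ∃ E ∈ F, E ⊂ X) :
    ∃ Y ∈ F, Covers F X Y ∧ ∀ A ∈ F, ∀ B ∈ F, ∀ C ∈ F, ¬ Theta X Y A B C := by
  classical
  obtain ⟨E, hE, hEX⟩ := hmin
  obtain ⟨Y₀, hY₀, -, hXY₀⟩ := exists_covers_of_ssubset hE hEX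
  obtain ⟨Y, hY, hYmin⟩ := (F.filter (Covers F X)).exists_min_image
    (fun Y => #(outsideAbove F X Y)) ⟨Y₀, mem_filter.2 ⟨hY₀, hXY₀⟩⟩
  obtain ⟨hYF, hXY⟩ := mem_filter.1 hY
  refine ⟨Y, hYF, hXY, fun A hA B hB C hC hθ => ?_⟩
  obtain ⟨Y', hY'F, hBY', hXY'⟩ := exists_covers_of_ssubset hB hθ.2.2.2.1
  exact (card_lt_card (hF.outsideAbove_ssubset hX hA hC hθ hBY')).not_ge
    (hYmin Y' (mem_filter.2 ⟨hY'F, hXY'⟩))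

lemma Covers.incomp_of_incomp (hXY : Covers F X Y) (hYS : Y ⊆ S) (hSX : S ⊆ X) (hT : T ∈ F)
    (hTX : T ⊆ X) (hST : Incomp S T) : Incomp Y T := by
  refine ⟨fun hYT => ?_, fun hTY => hST.2 (hTY.trans hYS)⟩
  rcases hXY.2 T hT hYT hTX with rfl | rfl
  · exact hST.2 hYS
  · exact hST.1 hSX

lemma not_isV3Copy_of_top_subset (hF : V3Free F) (hY : Y ∈ F) (hXY : Covers F X Y)
    (hθ : ∀ A ∈ F, ∀ B ∈ F, ∀ C ∈ F, ¬ Theta X Y A B C) (hYS : Y ⊆ S) (hSX : S ⊆ X)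
    (hA : A ∈ F) (hB : B ∈ F) (hC : C ∈ F) (hAY : A ⊆ Y) (hcopy : IsV3Copy A S B C)
    (hBX : B ⊆ X) : False := by
  obtain ⟨-, hAB, hAC, hSB, hSC, hBC⟩ := hcopy
  have hYB := hXY.incomp_of_incomp hYS hSX hB hBX hSB
  have hAY' : A ⊂ Y := hAY.ssubset_of_not_subset fun hYA => hYB.1 (hYA.trans hAB.subset)
  by_cases hCX : C ⊆ X
  · exact hF ⟨A, hA, Y, hY, B, hB, C, hC, hAY', hAB, hAC, hYB,
      hXY.incomp_of_incomp hYS hSX hC hCX hSC, hBC⟩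
  have hCY : ¬ C ⊆ Y := fun h => hCX (h.trans hXY.1.subset)
  by_cases hYC : Y ⊆ C
  · exact hθ A hA B hB C hC ⟨hAY', hAB, hXY.1, hBX.ssubset_of_not_subset
      fun hXB => hSB.1 (hSX.trans hXB), hYC.ssubset_of_not_subset hCY, hYB.symm, hBC,
      hCX, fun hXC => hSC.1 (hSX.trans hXC)⟩
  · exact hF ⟨A, hA, Y, hY, B, hB, C, hC, hAY', hAB, hAC, hYB, ⟨hYC, hCY⟩, hBC⟩

lemma sdiff_eq_singleton_of_subset_insert {i : Fin n} {Z : Finset (Fin n)} (hiY : i ∉ Y)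
    (hiZ : i ∈ Z) (hZ : Z ⊆ insert i Y) : Z \ Y = {i} := by
  grind

/-- If no member of `F` meets `X \ Y` exactly in `{i}` above `Y`, then `insert i Y ∉ F`, and the
copy of `V3` it creates either lives in `F` or yields a `Θ_{X,Y}` triple. -/
lemma V3Saturated.exists_sdiff_eq_singleton {i : Fin n} (hF : V3Saturated F) (hX : X ∈ F)
    (hY : Y ∈ F) (hXY : Covers F X Y) (hθ : ∀ A ∈ F, ∀ B ∈ F, ∀ C ∈ F, ¬ Theta X Y A B C)
    (hi : i ∈ X \ Y) : ∃ Z ∈ F, Z \ Y = {i} := by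
  obtain ⟨hiX, hiY⟩ := mem_sdiff.1 hi
  by_contra! hno
  have hnot_mem : ∀ Z ∈ F, Z ⊆ insert i Y → i ∉ Z := fun Z hZ hZS hiZ =>
    hno Z hZ (sdiff_eq_singleton_of_subset_insert hiY hiZ hZS)
  have hYS : Y ⊆ insert i Y := subset_insert _ _
  have hSX : insert i Y ⊆ X := insert_subset hiX hXY.1.subset
  have hSF : insert i Y ∉ F := fun h => hnot_mem _ h subset_rfl (mem_insert_self _ _)
  obtain ⟨A, hA, B, hB, C, hC, hcopy⟩ := hF.exists_isV3Copy hSF hY hYS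
  have hAY : A ⊆ Y :=
    (subset_insert_iff_of_notMem (hnot_mem A hA hcopy.1.subset)).1 hcopy.1.subset
  by_cases hBX : B ⊆ X
  · exact not_isV3Copy_of_top_subset hF.1 hY hXY hθ hYS hSX hA hB hC hAY hcopy hBX
  by_cases hCX : C ⊆ X
  · exact not_isV3Copy_of_top_subset hF.1 hY hXY hθ hYS hSX hA hC hB hAY
      hcopy.rotate.swap_left hCX
  obtain ⟨-, hAB, hAC, hSB, hSC, hBC⟩ := hcopy
  exact hF.1 ⟨A, hA, X, hX, B, hB, C, hC, hAY.trans_ssubset hXY.1, hAB, hAC,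
    ⟨fun h => hSB.1 (hSX.trans h), hBX⟩, ⟨fun h => hSC.1 (hSX.trans h), hCX⟩, hBC⟩

end

theorem stmt_6 (n : ℕ) (F : Finset (Finset (Fin n))) (hF : V3Saturated F)
    (X : Finset (Fin n)) (hX : X ∈ F) (hmin : ∃ E ∈ F, E ⊂ X) :
    ∃ Y ∈ F, Covers F X Y ∧ ∀ i ∈ X \ Y, ∃ Z ∈ F, Z \ Y = {i} := by
  obtain ⟨Y, hY, hXY, hθ⟩ := hF.1.exists_covers_forall_not_theta hX hmin
  exact ⟨Y, hY, hXY, fun i hi => hF.exists_sdiff_eq_singleton hX hY hXY hθ hi⟩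
end

section
/- Let F be a finite family of subsets of [n] containing [n], and suppose [n] = X₁ ⊋ X₂ ⊋ ⋯ ⊋ X_k is a chain in F such that for each α ≥ 2 and each i ∈ X_{α−1} \ X_α there exists Z with Z \ X_α = {i} and Z ∈ F. Then the map sending each i ∈ [n] \ X_k to such a Z_i is injective; in particular |X_k| ≥ n − |F|. -/
open Finset

variable {n : ℕ}

theorem stmt_7 (n k : ℕ) (F : Finset (Finset (Fin n)))
    (huniv : (Finset.univ : Finset (Fin n)) ∈ F)
    (X : Fin (k + 1) → Finset (Fin n)) (hX0 : X 0 = Finset.univ)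
    (hmem : ∀ α, X α ∈ F) (hchain : StrictAnti X)
    (Z : Fin n → Finset (Fin n))
    (hZ : ∀ i ∉ X (Fin.last k), Z i ∈ F ∧
      ∃ α : Fin k, i ∈ X α.castSucc \ X α.succ ∧ (Z i) \ X α.succ = {i}) :
    Set.InjOn Z {i | i ∉ X (Fin.last k)} ∧ n - F.card ≤ (X (Fin.last k)).card := by
  have key : ∀ i ∈ {i | i ∉ X (Fin.last k)}, ∀ j ∈ {i | i ∉ X (Fin.last k)},
      Z i = Z j → i = j := by
    have step : ∀ i j : Fin n, ∀ α β : Fin k, (Z i) \ X α.succ = {i} →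
        (Z j) \ X β.succ = {j} → α ≤ β → Z i = Z j → i = j := by
      intro i j α β hi hj hab hZij
      have hsub : X β.succ ⊆ X α.succ := by
        rcases eq_or_lt_of_le hab with h | h
        · simp [h]
        · exact (hchain (by simpa using h)).subset
      have : ({i} : Finset (Fin n)) ⊆ {j} := by
        rw [← hi, ← hj, hZij]
        exact Finset.sdiff_subset_sdiff le_rfl hsub
      simpa using Finset.singleton_subset_singleton.mp this
    intro i hi j hj hZij
    obtain ⟨-, α, -, hiα⟩ := hZ i hi
    obtain ⟨-, β, -, hjβ⟩ := hZ j hj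
    rcases le_total α β with h | h
    · exact step i j α β hiα hjβ h hZij
    · exact (step j i β α hjβ hiα h hZij.symm).symm
  refine ⟨key, ?_⟩
  have hcard : (Finset.univ \ X (Fin.last k)).card ≤ F.card := by
    apply Finset.card_le_card_of_injOn Z
    · intro i hi
      exact (hZ i (by simpa using hi)).1
    · intro i hi j hj h
      exact key i (by simpa using hi) j (by simpa using hj) h
  have h2 : (Finset.univ \ X (Fin.last k)).card = n - (X (Fin.last k)).card := by
    rw [Finset.card_sdiff_of_subset (Finset.subset_univ _), Finset.card_univ, Fintype.card_fin]
  have h3 : (X (Fin.last k)).card ≤ n := by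
    simpa using Finset.card_le_card (Finset.subset_univ (X (Fin.last k)))
  omega
end

section
/- Let F be a V3-saturated family of subsets of [n] and let S ∈ F be inclusion-minimal. Then for every i ∈ S there exists an element A ∈ F with S \ A = {i}; consequently |S| ≤ |F|. -/
open Finset

variable {n : ℕ}

theorem stmt_9 (n : ℕ) (F : Finset (Finset (Fin n))) (hF : V3Saturated F)
    (S : Finset (Fin n)) (hS : S ∈ F) (hmin : ∀ T ∈ F, ¬ T ⊂ S) :
    (∀ i ∈ S, ∃ A ∈ F, S \ A = {i}) ∧ S.card ≤ F.card := by
  classical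
  have key : ∀ i ∈ S, ∃ A ∈ F, S \ A = {i} := by
    intro i hi
    set T := S.erase i with hT
    have hTS : T ⊂ S := Finset.erase_ssubset hi
    have hTF : T ∉ F := fun h => hmin T h hTS
    have hsat := hF.2 T hTF
    rw [V3Free] at hsat
    push_neg at hsat
    obtain ⟨A, hA, B1, hB1, B2, hB2, B3, hB3, c1, c2, c3, i12, i13, i23⟩ := hsat
    -- if some B_j = T, contradiction with minimality
    have hBne : ∀ B : Finset (Fin n), A ⊂ B → B ≠ T := by
      intro B hAB hBT
      rw [hBT] at hAB
      have hAS : A ⊂ S := lt_trans hAB hTS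
      have hAF : A ∈ F := by
        rcases Finset.mem_insert.mp hA with h | h
        · rw [h] at hAB; exact absurd hAB (lt_irrefl T)
        · exact h
      exact hmin A hAF hAS
    have hB1F : B1 ∈ F := (Finset.mem_insert.mp hB1).resolve_left (hBne B1 c1)
    have hB2F : B2 ∈ F := (Finset.mem_insert.mp hB2).resolve_left (hBne B2 c2)
    have hB3F : B3 ∈ F := (Finset.mem_insert.mp hB3).resolve_left (hBne B3 c3)
    have hAT : A = T := by
      rcases Finset.mem_insert.mp hA with h | h
      · exact h
      · exact absurd ⟨A, h, B1, hB1F, B2, hB2F, B3, hB3F, c1, c2, c3, i12, i13, i23⟩ hF.1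
    subst hAT
    -- if all B_j contain i, then S ⊊ B_j for all j, giving a V3 copy in F
    have hgood : ∀ B : Finset (Fin n), T ⊂ B → i ∉ B → S \ B = {i} := by
      intro B hTB hiB
      ext x
      simp only [Finset.mem_sdiff, Finset.mem_singleton]
      constructor
      · rintro ⟨hxS, hxB⟩
        by_contra hxi
        exact hxB (hTB.1 (Finset.mem_erase.mpr ⟨hxi, hxS⟩))
      · rintro rfl
        exact ⟨hi, hiB⟩
    by_cases h1 : i ∈ B1
    · by_cases h2 : i ∈ B2
      · by_cases h3 : i ∈ B3
        · exfalso
          have hsub : ∀ B : Finset (Fin n), T ⊂ B → i ∈ B → S ⊆ B := by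
            intro B hTB hiB x hx
            by_cases hxi : x = i
            · exact hxi ▸ hiB
            · exact hTB.1 (Finset.mem_erase.mpr ⟨hxi, hx⟩)
          have s1 := hsub B1 c1 h1
          have s2 := hsub B2 c2 h2
          have s3 := hsub B3 c3 h3
          have ss1 : S ⊂ B1 := s1.ssubset_of_ne (fun h => i12.1 (h ▸ s2))
          have ss2 : S ⊂ B2 := s2.ssubset_of_ne (fun h => i23.1 (h ▸ s3))
          have ss3 : S ⊂ B3 := s3.ssubset_of_ne (fun h => i13.2 (h ▸ s1))
          exact hF.1 ⟨S, hS, B1, hB1F, B2, hB2F, B3, hB3F, ss1, ss2, ss3, i12, i13, i23⟩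
        · exact ⟨B3, hB3F, hgood B3 c3 h3⟩
      · exact ⟨B2, hB2F, hgood B2 c2 h2⟩
    · exact ⟨B1, hB1F, hgood B1 c1 h1⟩
  refine ⟨key, ?_⟩
  choose! f hfF hfS using key
  refine Finset.card_le_card_of_injOn f (fun i hi => hfF i hi) ?_
  intro a ha b hb hab
  have : ({a} : Finset (Fin n)) = ({b} : Finset (Fin n)) := by
    rw [← hfS a ha, ← hfS b hb, hab]
  simpa using this
end

section
/- Let F be a V3-free family of subsets of [n], and suppose X, Y, B ∈ F with X covering both Y and B, and suppose (A, B, C) ∈ Θ_{X,Y} and (A', B', C') ∈ Θ_{X,B} for some A, C, A', B', C' ∈ F. If C and C' are incomparable, then F contains an induced copy of V3 on {A, C, X, C'} (with minimal element A), a contradiction; hence C and C' are comparable. -/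
open Finset

variable {n : ℕ}

theorem stmt_14 (n : ℕ) (F : Finset (Finset (Fin n))) (hF : V3Free F)
    (X Y B : Finset (Fin n)) (hX : X ∈ F) (hY : Y ∈ F) (hB : B ∈ F)
    (hcovY : Covers F X Y) (hcovB : Covers F X B)
    (A C A' B' C' : Finset (Fin n))
    (hA : A ∈ F) (hC : C ∈ F) (hA' : A' ∈ F) (hB' : B' ∈ F) (hC' : C' ∈ F)
    (h1 : Theta X Y A B C) (h2 : Theta X B A' B' C') :
    C ⊆ C' ∨ C' ⊆ C := by
  by_contra h
  push_neg at h
  obtain ⟨hAY, hAB, hYX, hBX, hYC, _, _, hCX⟩ := h1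
  obtain ⟨_, _, _, _, hBC', _, _, hC'X⟩ := h2
  exact hF ⟨A, hA, C, hC, X, hX, C', hC',
    hAY.trans hYC, hAY.trans hYX, (hAB.trans hBC'),
    hCX, ⟨h.1, h.2⟩, ⟨hC'X.2, hC'X.1⟩⟩
end
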